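/- Define substitutions over {1,2,3}: ζ_1: 1↦1, 2↦2, 3↦23; ζ_2: 1↦1, 2↦3, 3↦32; ζ_3: 1↦2, 2↦3, 3↦31. For every q ∈ ℕ: if an infinite word ω contains factors u, v with Ab(u) − Ab(v) = (q+1, −q, −1)^T, then the word τ_q(ω) := ζ_1^q ζ_2 ζ_1 ζ_3^2 ζ_1(ω) contains factors u', v' with Ab(u') − Ab(v') = (−(q+2), q+1, 1)^T. -/
import Mathlib


def prefixW {A : Type*} (w : ℕ → A) (n : ℕ) : List A := (List.range n).map w

def IsFactor {A : Type*} (w : ℕ → A) (u : List A) : Prop :=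
  ∃ k, u = (List.range u.length).map (fun t => w (k + t))

def applySub {A : Type*} (σ : A → List A) (w : List A) : List A := w.flatMap σ

def SubstOfInf {A : Type*} (σ : A → List A) (w' w : ℕ → A) : Prop :=
  ∀ m, prefixW w (applySub σ (prefixW w' m)).length = applySub σ (prefixW w' m)

def FactorOfImage {A : Type*} (σ : A → List A) (ω : ℕ → A) (u : List A) : Prop :=
  ∃ w, IsFactor ω w ∧ u <:+: applySub σ w

def BalancedWord {A : Type*} [DecidableEq A] (C : ℕ) (w : ℕ → A) : Prop :=
  ∀ u v, IsFactor w u → IsFactor w v → u.length = v.length →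
    ∀ i, |(u.count i : ℤ) - (v.count i : ℤ)| ≤ (C : ℤ)

def z1 : Fin 3 → List (Fin 3) := fun a => if a = 2 then [1, 2] else [a]

def z2 : Fin 3 → List (Fin 3) := fun a => if a = 0 then [0] else if a = 1 then [2] else [2, 1]

def z3 : Fin 3 → List (Fin 3) := fun a => if a = 0 then [1] else if a = 1 then [2] else [2, 0]

def compSub {A : Type*} (σ τ : A → List A) : A → List A := fun a => applySub σ (τ a)

def subPow {A : Type*} (σ : A → List A) : ℕ → (A → List A)
  | 0 => fun a => [a]
  | n + 1 => compSub σ (subPow σ n)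

def tauSub (q : ℕ) : Fin 3 → List (Fin 3) :=
  compSub (subPow z1 q) (compSub z2 (compSub z1 (compSub (subPow z3 2) z1)))

def rhoSub : ℕ → (Fin 3 → List (Fin 3))
  | 0 => fun a => [a]
  | c + 1 => compSub (tauSub c) (rhoSub c)

lemma count_applySub (σ : Fin 3 → List (Fin 3)) (w : List (Fin 3)) (a : Fin 3) :
    (applySub σ w).count a =
      w.count 0 * (σ 0).count a + w.count 1 * (σ 1).count a + w.count 2 * (σ 2).count a := by
  induction w with
  | nil => simp [applySub]
  | cons b w ih =>
    have hb : applySub σ (b :: w) = σ b ++ applySub σ w := by simp [applySub]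
    rw [hb, List.count_append, ih]
    fin_cases b <;> simp [List.count_cons] <;> ring

lemma subPow_z1_0 (q : ℕ) : subPow z1 q 0 = [0] := by
  induction q with
  | zero => rfl
  | succ n ih => simp [subPow, compSub, ih]; rfl

lemma subPow_z1_1 (q : ℕ) : subPow z1 q 1 = [1] := by
  induction q with
  | zero => rfl
  | succ n ih => simp [subPow, compSub, ih]; rfl

lemma flatMap_z1_replicate (n : ℕ) : (List.replicate n (1 : Fin 3)).flatMap z1 = List.replicate n 1 := by
  induction n with
  | zero => rfl
  | succ m ih => rw [List.replicate_succ, List.flatMap_cons, ih]; rfl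

lemma subPow_z1_2 (q : ℕ) : subPow z1 q 2 = List.replicate q 1 ++ [2] := by
  induction q with
  | zero => rfl
  | succ n ih =>
    show applySub z1 (subPow z1 n 2) = _
    rw [ih]
    show (List.replicate n (1:Fin 3) ++ [2]).flatMap z1 = _
    rw [List.flatMap_append, flatMap_z1_replicate, List.replicate_succ']
    simp [z1]

lemma inner_0 : compSub z2 (compSub z1 (compSub (subPow z3 2) z1)) 0 = [2,2,1] := by decide
lemma inner_1 : compSub z2 (compSub z1 (compSub (subPow z3 2) z1)) 1 = [2,2,1] ++ [0] := by decide
lemma inner_2 : compSub z2 (compSub z1 (compSub (subPow z3 2) z1)) 2 = [2,2,1] ++ [0,2,2,1,0,2] := by decide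

lemma tau_eq (q : ℕ) (a : Fin 3) :
    tauSub q a = applySub (subPow z1 q) (compSub z2 (compSub z1 (compSub (subPow z3 2) z1)) a) := rfl

lemma tau0_pre1 (q : ℕ) : tauSub q 1 = tauSub q 0 ++ applySub (subPow z1 q) [0] := by
  rw [tau_eq, tau_eq, inner_1, inner_0]; simp [applySub]

lemma tau0_pre2 (q : ℕ) : tauSub q 2 = tauSub q 0 ++ applySub (subPow z1 q) [0,2,2,1,0,2] := by
  rw [tau_eq, tau_eq, inner_2, inner_0]; simp [applySub]

lemma tau0_prefix (q : ℕ) (a : Fin 3) : ∃ s, tauSub q a = tauSub q 0 ++ s := by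
  fin_cases a
  · exact ⟨[], by simp⟩
  · exact ⟨_, tau0_pre1 q⟩
  · exact ⟨_, tau0_pre2 q⟩

lemma count_tau0 (q : ℕ) (a : Fin 3) :
    (tauSub q 0).count a = (if a = 1 then 2*q+1 else if a = 2 then 2 else 0) := by
  rw [tau_eq, inner_0, count_applySub, subPow_z1_0, subPow_z1_1, subPow_z1_2]
  fin_cases a <;> (simp [List.count_cons, List.count_replicate]; try ring)

lemma count_tau1 (q : ℕ) (a : Fin 3) :
    (tauSub q 1).count a = (if a = 1 then 2*q+1 else if a = 2 then 2 else 1) := by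
  rw [tau_eq, inner_1, count_applySub, subPow_z1_0, subPow_z1_1, subPow_z1_2]
  fin_cases a <;> (simp [List.count_cons, List.count_replicate]; try ring)

lemma count_tau2 (q : ℕ) (a : Fin 3) :
    (tauSub q 2).count a = (if a = 1 then 5*q+2 else if a = 2 then 5 else 2) := by
  rw [tau_eq, inner_2, count_applySub, subPow_z1_0, subPow_z1_1, subPow_z1_2]
  fin_cases a <;> (simp [List.count_cons, List.count_replicate]; try ring)
theorem stmt13 (q : ℕ) (ω : ℕ → Fin 3) (u v : List (Fin 3))
    (hu : IsFactor ω u) (hv : IsFactor ω v)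
    (hd : ∀ a : Fin 3, (u.count a : ℤ) - (v.count a : ℤ) = ![(q : ℤ) + 1, -(q : ℤ), -1] a) :
    ∃ u' v' : List (Fin 3), FactorOfImage (tauSub q) ω u' ∧ FactorOfImage (tauSub q) ω v' ∧
      ∀ a : Fin 3, (u'.count a : ℤ) - (v'.count a : ℤ) = ![-((q : ℤ) + 2), (q : ℤ) + 1, 1] a := by
  obtain ⟨k, hk⟩ := hu
  set a0 := ω (k + u.length) with ha0
  have hu1 : IsFactor ω (u ++ [a0]) := by
    refine ⟨k, ?_⟩
    have hlen : (u ++ [a0]).length = u.length + 1 := by simp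
    rw [hlen, List.range_succ, List.map_append, ← hk]
    rfl
  have h2 := hd 2
  have h0 := hd 0
  have h1 := hd 1
  simp only [Matrix.cons_val_zero, Matrix.cons_val_one, Matrix.head_cons,
    Matrix.cons_val_two, Matrix.tail_cons] at h0 h1 h2
  have hvne : v ≠ [] := by
    intro h
    rw [h] at h2
    simp at h2
  obtain ⟨b, t, hbt⟩ := List.exists_cons_of_ne_nil hvne
  set v' : List (Fin 3) := (applySub (tauSub q) v).drop (tauSub q 0).length with hv'def
  have hsplit : applySub (tauSub q) v = tauSub q 0 ++ v' := by
    obtain ⟨s, hs⟩ := tau0_prefix q b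
    have heq : applySub (tauSub q) v = tauSub q 0 ++ (s ++ applySub (tauSub q) t) := by
      rw [hbt]
      show tauSub q b ++ applySub (tauSub q) t = _
      rw [hs, List.append_assoc]
    rw [hv'def, heq, List.drop_left]
  refine ⟨applySub (tauSub q) u ++ tauSub q 0, v', ?_, ?_, ?_⟩
  · refine ⟨u ++ [a0], hu1, ?_⟩
    obtain ⟨s, hs⟩ := tau0_prefix q a0
    refine ⟨[], s, ?_⟩
    have happ : applySub (tauSub q) (u ++ [a0]) = applySub (tauSub q) u ++ tauSub q a0 := by
      simp [applySub]
    rw [happ, hs]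
    simp
  · exact ⟨v, hv, (List.drop_suffix _ _).isInfix⟩
  · intro a
    have hcu := count_applySub (tauSub q) u a
    have hcv := count_applySub (tauSub q) v a
    have hu'c : (applySub (tauSub q) u ++ tauSub q 0).count a
        = (applySub (tauSub q) u).count a + (tauSub q 0).count a := List.count_append ..
    have hv'c : (applySub (tauSub q) v).count a = (tauSub q 0).count a + v'.count a := by
      rw [hsplit, List.count_append]
    have key : ((applySub (tauSub q) u ++ tauSub q 0).count a : ℤ) - (v'.count a : ℤ)
        = ((u.count 0 : ℤ) - v.count 0) * ((tauSub q 0).count a : ℤ)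
        + ((u.count 1 : ℤ) - v.count 1) * ((tauSub q 1).count a : ℤ)
        + ((u.count 2 : ℤ) - v.count 2) * ((tauSub q 2).count a : ℤ)
        + 2 * ((tauSub q 0).count a : ℤ) := by
      rw [hu'c, hcu]
      rw [hcv] at hv'c
      have e2 : (v'.count a : ℤ) = (v.count 0 * (tauSub q 0).count a
          + v.count 1 * (tauSub q 1).count a + v.count 2 * (tauSub q 2).count a : ℕ)
          - ((tauSub q 0).count a : ℤ) := by
        rw [← hcv, hcv] at hv'c
        push_cast [hv'c]
        linarith [hv'c]
      rw [e2]
      push_cast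
      ring
    rw [key, count_tau0, count_tau1, count_tau2, h0, h1, h2]
    fin_cases a <;> norm_num <;> push_cast <;> ring
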